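/- arXiv:2311.02969 — 3 statements merged into one kernel-verified Lean document; each statement's English description precedes it below -/
import Mathlib

section
/- Let G be a graph, let H be a subgraph of G, let Q be a cycle in H, and let φ be an (I,F)-coloring of H. Let u1, u2, …, ut be distinct vertices of G not in H such that each ui has at most two neighbors in V(H) ∪ {u1, …, u(i−1)}. Extend φ by nicely coloring u1, u2, …, ut in this order (assign I to ui if none of its already-colored neighbors has color I, and assign F otherwise). Then in the resulting coloring of the subgraph of G induced by V(H) ∪ {u1, …, ut}, every F-cycle is already an F-cycle of φ and every splitting F-path of Q is already a splitting F-path of Q under φ; that is, nicely coloring the sequence creates no new F-cycles and no new splitting F-paths of Q. -/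
open SimpleGraph

namespace IFPaper

variable {V : Type}

/-- An `(I,F)`-coloring of a graph, encoded as a Boolean coloring where
`true` means color `I` and `false` means color `F`:  the `I`-colored vertices
form an independent set and the `F`-colored vertices induce a forest
(no cycle has all of its vertices colored `F`). -/
def IFColoring (G : SimpleGraph V) (c : V → Bool) : Prop :=
  (∀ ⦃u v : V⦄, G.Adj u v → c u = true → c v = false) ∧
  (∀ (v : V) (w : G.Walk v v), w.IsCycle → ¬ (∀ x ∈ w.support, c x = false))

/-- A graph is `(I,F)`-colorable if it admits an `(I,F)`-coloring. -/
def IFColorable (G : SimpleGraph V) : Prop := ∃ c : V → Bool, IFColoring G c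

/-- An `(I,F)`-coloring of the subgraph of `G` induced on the set `S`. -/
def IFColoringOn (G : SimpleGraph V) (S : Set V) (c : V → Bool) : Prop :=
  (∀ ⦃u v : V⦄, u ∈ S → v ∈ S → G.Adj u v → c u = true → c v = false) ∧
  (∀ (v : V) (w : G.Walk v v), w.IsCycle → (∀ x ∈ w.support, x ∈ S) →
    ¬ (∀ x ∈ w.support, c x = false))

/-- A splitting `F`-path of (the vertex set `Q` of) a cycle: a path all of whose
vertices get color `F`, whose two endpoints lie on `Q`, and all of whose other
vertices (at least one) do not lie on `Q`. -/
def IsSplittingFPath (G : SimpleGraph V) (Q : Set V) (c : V → Bool)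
    {a b : V} (p : G.Walk a b) : Prop :=
  p.IsPath ∧ (∀ x ∈ p.support, c x = false) ∧ a ∈ Q ∧ b ∈ Q ∧ 2 ≤ p.length ∧
  ∀ x ∈ p.support, x ≠ a → x ≠ b → x ∉ Q

/-- A super IF-coloring of `(G, Q)`: an `(I,F)`-coloring of `G` with no
splitting `F`-path of `Q`. -/
def SuperIFColoring (G : SimpleGraph V) (Q : Set V) (c : V → Bool) : Prop :=
  IFColoring G c ∧ ∀ (a b : V) (p : G.Walk a b), ¬ IsSplittingFPath G Q c p

/-- `d* ≥ 3`: any two distinct cycles of length at most `5` are at distance at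
least `3`. -/
def Cycles5Apart (G : SimpleGraph V) : Prop :=
  ∀ ⦃u v : V⦄ (c1 : G.Walk u u) (c2 : G.Walk v v),
    c1.IsCycle → c2.IsCycle → c1.length ≤ 5 → c2.length ≤ 5 →
    {e : Sym2 V | e ∈ c1.edges} ≠ {e : Sym2 V | e ∈ c2.edges} →
    ∀ x ∈ c1.support, ∀ y ∈ c2.support, 3 ≤ G.dist x y

/-- A claw of the cycle `C`: a vertex not on `C` with three neighbors on `C`. -/
def HasClaw (G : SimpleGraph V) {v : V} (C : G.Walk v v) : Prop :=
  ∃ x : V, x ∉ C.support ∧ ∃ a b c : V, a ∈ C.support ∧ b ∈ C.support ∧ c ∈ C.support ∧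
    a ≠ b ∧ a ≠ c ∧ b ≠ c ∧ G.Adj x a ∧ G.Adj x b ∧ G.Adj x c

/-- A triclaw of the cycle `C`: a triangle `x y z` disjoint from `C`, joined by
three edges to three distinct vertices of `C`. -/
def HasTriclaw (G : SimpleGraph V) {v : V} (C : G.Walk v v) : Prop :=
  ∃ x y z : V, x ∉ C.support ∧ y ∉ C.support ∧ z ∉ C.support ∧
    G.Adj x y ∧ G.Adj y z ∧ G.Adj x z ∧
    ∃ a b c : V, a ∈ C.support ∧ b ∈ C.support ∧ c ∈ C.support ∧
      a ≠ b ∧ a ≠ c ∧ b ≠ c ∧ G.Adj x a ∧ G.Adj y b ∧ G.Adj z c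

/-- A bad cycle is a `9`-cycle having a claw or a triclaw. -/
def IsBadCycle (G : SimpleGraph V) {v : V} (C : G.Walk v v) : Prop :=
  C.IsCycle ∧ C.length = 9 ∧ (HasClaw G C ∨ HasTriclaw G C)

/-- A good cycle is a cycle that is not bad. -/
def IsGoodCycle (G : SimpleGraph V) {v : V} (C : G.Walk v v) : Prop :=
  C.IsCycle ∧ ¬ IsBadCycle G C

/-- The interior of an arc parametrized by `[0,1]`. -/
def ArcInterior (γ : ℝ → ℝ × ℝ) : Set (ℝ × ℝ) := γ '' Set.Ioo 0 1

/-- The image of an arc parametrized by `[0,1]`. -/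
def ArcImage (γ : ℝ → ℝ × ℝ) : Set (ℝ × ℝ) := γ '' Set.Icc 0 1

/-- A plane embedding of a simple graph: an injective placement of the vertices
in the plane together with, for every edge, a simple arc joining the images of
its endpoints, such that arcs meet only at common endpoints and no arc passes
through a vertex. -/
structure IsPlaneEmbedding (G : SimpleGraph V) (vtx : V → ℝ × ℝ)
    (arc : V → V → ℝ → ℝ × ℝ) : Prop where
  vtx_inj : Function.Injective vtx
  arc_cont : ∀ ⦃u v : V⦄, G.Adj u v → ContinuousOn (arc u v) (Set.Icc 0 1)
  arc_injOn : ∀ ⦃u v : V⦄, G.Adj u v → Set.InjOn (arc u v) (Set.Icc 0 1)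
  arc_start : ∀ ⦃u v : V⦄, G.Adj u v → arc u v 0 = vtx u
  arc_end : ∀ ⦃u v : V⦄, G.Adj u v → arc u v 1 = vtx v
  arc_symm : ∀ ⦃u v : V⦄, G.Adj u v → ∀ t : ℝ, arc v u t = arc u v (1 - t)
  arc_avoids_vtx : ∀ ⦃u v : V⦄, G.Adj u v → ∀ w : V, vtx w ∉ ArcInterior (arc u v)
  arc_disjoint : ∀ ⦃u v u' v' : V⦄, G.Adj u v → G.Adj u' v' → s(u, v) ≠ s(u', v') →
    ArcInterior (arc u v) ∩ ArcInterior (arc u' v') = ∅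

/-- A graph is planar if it admits a plane embedding. -/
def IsPlanarGraph (G : SimpleGraph V) : Prop :=
  ∃ (vtx : V → ℝ × ℝ) (arc : V → V → ℝ → ℝ × ℝ), IsPlaneEmbedding G vtx arc

/-- The subset of the plane covered by a plane drawing of `G`. -/
def Drawing (G : SimpleGraph V) (vtx : V → ℝ × ℝ) (arc : V → V → ℝ → ℝ × ℝ) :
    Set (ℝ × ℝ) :=
  Set.range vtx ∪ ⋃ (u : V) (v : V) (_ : G.Adj u v), ArcImage (arc u v)

/-- The subset of the plane covered by the drawing of a walk `w`. -/
def WalkDrawing (G : SimpleGraph V) (arc : V → V → ℝ → ℝ × ℝ)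
    {a b : V} (w : G.Walk a b) : Set (ℝ × ℝ) :=
  ⋃ (u : V) (v : V) (_ : G.Adj u v) (_ : s(u, v) ∈ w.edges), ArcImage (arc u v)

/-- A face of a plane drawing: a connected component of the complement of the
drawing. -/
def IsFace (G : SimpleGraph V) (vtx : V → ℝ × ℝ) (arc : V → V → ℝ → ℝ × ℝ)
    (f : Set (ℝ × ℝ)) : Prop :=
  ∃ p : ℝ × ℝ, p ∉ Drawing G vtx arc ∧
    f = connectedComponentIn (Drawing G vtx arc)ᶜ p

/-- The outer face: the unbounded face. -/
def IsOuterFace (G : SimpleGraph V) (vtx : V → ℝ × ℝ) (arc : V → V → ℝ → ℝ × ℝ)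
    (f : Set (ℝ × ℝ)) : Prop :=
  IsFace G vtx arc f ∧ ¬ Bornology.IsBounded f

/-- A vertex is on a face if its image lies on the boundary of the face. -/
def VertexOnFace (vtx : V → ℝ × ℝ) (f : Set (ℝ × ℝ)) (v : V) : Prop :=
  vtx v ∈ frontier f

/-- The face `f` is bounded by the (closed) walk `w`. -/
def FaceBoundedBy (G : SimpleGraph V) (vtx : V → ℝ × ℝ) (arc : V → V → ℝ → ℝ × ℝ)
    (f : Set (ℝ × ℝ)) {a : V} (w : G.Walk a a) : Prop :=
  IsFace G vtx arc f ∧ frontier f = WalkDrawing G arc w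

/-- A vertex lies (strictly) inside the cycle `C` of the plane graph. -/
def VertexInsideCycle (G : SimpleGraph V) (vtx : V → ℝ × ℝ)
    (arc : V → V → ℝ → ℝ × ℝ) {a : V} (C : G.Walk a a) (v : V) : Prop :=
  vtx v ∉ WalkDrawing G arc C ∧
  Bornology.IsBounded (connectedComponentIn (WalkDrawing G arc C)ᶜ (vtx v))

/-- A vertex lies (strictly) outside the cycle `C` of the plane graph. -/
def VertexOutsideCycle (G : SimpleGraph V) (vtx : V → ℝ × ℝ)
    (arc : V → V → ℝ → ℝ × ℝ) {a : V} (C : G.Walk a a) (v : V) : Prop :=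
  vtx v ∉ WalkDrawing G arc C ∧
  ¬ Bornology.IsBounded (connectedComponentIn (WalkDrawing G arc C)ᶜ (vtx v))

/-- A cycle of a plane graph is separating if its interior and its exterior
each contain a vertex of the graph. -/
def IsSeparatingCycle (G : SimpleGraph V) (vtx : V → ℝ × ℝ)
    (arc : V → V → ℝ → ℝ × ℝ) {a : V} (C : G.Walk a a) : Prop :=
  (∃ v : V, VertexInsideCycle G vtx arc C v) ∧
  (∃ v : V, VertexOutsideCycle G vtx arc C v)

/-- The cycle `C` has no chord in `G`. -/
def Chordless (G : SimpleGraph V) {a : V} (C : G.Walk a a) : Prop :=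
  ∀ ⦃u v : V⦄, u ∈ C.support → v ∈ C.support → G.Adj u v → s(u, v) ∈ C.edges

/-- The precoloring `c0` of the cycle `C0` extends to a super IF-coloring of
`(G, C0)`. -/
def ExtendsToSuper (G : SimpleGraph V) {v0 : V} (C0 : G.Walk v0 v0)
    (c0 : V → Bool) : Prop :=
  ∃ c : V → Bool, SuperIFColoring G {x | x ∈ C0.support} c ∧
    ∀ x ∈ C0.support, c x = c0 x

/-- A counterexample to the extension theorem: a planar graph with `d* ≥ 3`, a
good cycle `C0` of length at most `9`, and an `(I,F)`-coloring of `G[V(C0)]`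
which does not extend to a super IF-coloring of `(G, C0)`. -/
def IsCounterexample (G : SimpleGraph V) {v0 : V} (C0 : G.Walk v0 v0)
    (c0 : V → Bool) : Prop :=
  IsPlanarGraph G ∧ Cycles5Apart G ∧ IsGoodCycle G C0 ∧ C0.length ≤ 9 ∧
  IFColoringOn G {x | x ∈ C0.support} c0 ∧ ¬ ExtendsToSuper G C0 c0

/-- The quantity `|V(G)| + |E(G)|`. -/
noncomputable def graphSize {V : Type} [Fintype V] (G : SimpleGraph V) : ℕ :=
  Fintype.card V + G.edgeSet.ncard

/-- A minimal counterexample to the extension theorem: one minimizing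
`|V(G)| + |E(G)|` among all counterexamples. -/
def IsMinimalCounterexample [Fintype V] (G : SimpleGraph V) {v0 : V}
    (C0 : G.Walk v0 v0) (c0 : V → Bool) : Prop :=
  IsCounterexample G C0 c0 ∧
  ∀ (n : ℕ) (G' : SimpleGraph (Fin n)) (v0' : Fin n) (C0' : G'.Walk v0' v0')
    (c0' : Fin n → Bool), IsCounterexample G' C0' c0' →
      graphSize G ≤ graphSize G'

/-- A chord of the cycle `C` splitting it into two cycles of lengths `l1` and
`l2`: an edge between two non-consecutive vertices of `C` together with two
cycles of lengths `l1` and `l2` which both use the chord, use otherwise only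
edges of `C`, and together partition the edges of `C`. -/
def HasChordSplit (G : SimpleGraph V) {a : V} (C : G.Walk a a) (l1 l2 : ℕ) : Prop :=
  ∃ u v : V, u ∈ C.support ∧ v ∈ C.support ∧ G.Adj u v ∧ s(u, v) ∉ C.edges ∧
    ∃ (c1 c2 : G.Walk u u), c1.IsCycle ∧ c2.IsCycle ∧
      c1.length = l1 ∧ c2.length = l2 ∧
      s(u, v) ∈ c1.edges ∧ s(u, v) ∈ c2.edges ∧
      (∀ e ∈ c1.edges, e ≠ s(u, v) → e ∈ C.edges) ∧
      (∀ e ∈ c2.edges, e ≠ s(u, v) → e ∈ C.edges) ∧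
      (∀ e ∈ C.edges, (e ∈ c1.edges ↔ e ∉ c2.edges))

/-- A `(l1, l2, l3)`-claw of the cycle `C`: a claw which together with `C`
forms three cycles of lengths `l1`, `l2` and `l3`. -/
def HasClawSplit (G : SimpleGraph V) {a : V} (C : G.Walk a a) (l1 l2 l3 : ℕ) : Prop :=
  ∃ x : V, x ∉ C.support ∧ ∃ v1 v2 v3 : V,
    v1 ∈ C.support ∧ v2 ∈ C.support ∧ v3 ∈ C.support ∧
    v1 ≠ v2 ∧ v1 ≠ v3 ∧ v2 ≠ v3 ∧ G.Adj x v1 ∧ G.Adj x v2 ∧ G.Adj x v3 ∧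
    ∃ (w1 w2 w3 : G.Walk x x), w1.IsCycle ∧ w2.IsCycle ∧ w3.IsCycle ∧
      w1.length = l1 ∧ w2.length = l2 ∧ w3.length = l3 ∧
      (∀ e ∈ w1.edges, e ∈ C.edges ∨ e = s(x, v1) ∨ e = s(x, v2) ∨ e = s(x, v3)) ∧
      (∀ e ∈ w2.edges, e ∈ C.edges ∨ e = s(x, v1) ∨ e = s(x, v2) ∨ e = s(x, v3)) ∧
      (∀ e ∈ w3.edges, e ∈ C.edges ∨ e = s(x, v1) ∨ e = s(x, v2) ∨ e = s(x, v3)) ∧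
      (∀ e ∈ C.edges, (e ∈ w1.edges ∧ e ∉ w2.edges ∧ e ∉ w3.edges) ∨
        (e ∉ w1.edges ∧ e ∈ w2.edges ∧ e ∉ w3.edges) ∨
        (e ∉ w1.edges ∧ e ∉ w2.edges ∧ e ∈ w3.edges))

/-- A special `9`-cycle: a `9`-cycle having a `(3,8)`-chord or a
`(5,5,5)`-claw. -/
def IsSpecial9Cycle (G : SimpleGraph V) {a : V} (C : G.Walk a a) : Prop :=
  C.IsCycle ∧ C.length = 9 ∧ (HasChordSplit G C 3 8 ∨ HasClawSplit G C 5 5 5)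

/-- Two cycles are normally adjacent if they share exactly one edge and
exactly two vertices. -/
def NormallyAdjacent (G : SimpleGraph V) {a b : V}
    (c1 : G.Walk a a) (c2 : G.Walk b b) : Prop :=
  (∃ e : Sym2 V, {e' : Sym2 V | e' ∈ c1.edges} ∩ {e' : Sym2 V | e' ∈ c2.edges} = {e}) ∧
  (∃ x y : V, x ≠ y ∧ {z : V | z ∈ c1.support} ∩ {z : V | z ∈ c2.support} = {x, y})

/-- A `3`-fold cover `(H, L)` of `G`. -/
def IsDPCover (G : SimpleGraph V) {W : Type} (H : SimpleGraph W)
    (L : V → Finset W) : Prop :=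
  (∀ v : V, (L v).card = 3) ∧
  (∀ ⦃u v : V⦄, u ≠ v → Disjoint (L u) (L v)) ∧
  (∀ v : V, ∀ a ∈ L v, ∀ b ∈ L v, ¬ H.Adj a b) ∧
  (∀ ⦃a b : W⦄, H.Adj a b → ∃ u v : V, G.Adj u v ∧ a ∈ L u ∧ b ∈ L v) ∧
  (∀ ⦃u v : V⦄, u ≠ v → ∀ a ∈ L u, ∀ b ∈ L v, ∀ b' ∈ L v,
    H.Adj a b → H.Adj a b' → b = b')

/-- `G` is DP-`3`-colorable: for every `3`-fold cover `(H, L)` of `G` there is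
an independent transversal picking one vertex from each fiber. -/
def DP3Colorable (G : SimpleGraph V) : Prop :=
  ∀ (W : Type) (H : SimpleGraph W) (L : V → Finset W), IsDPCover G H L →
    ∃ f : V → W, (∀ v : V, f v ∈ L v) ∧ ∀ u v : V, ¬ H.Adj (f u) (f v)
end IFPaper

/-! Consider the last new vertex `u i` on an `F`-cycle, or in the interior of an `F`-path, of the
new coloring. Both of its neighbours there were colored before it, so they are all of its at most
two earlier neighbours; as they have color `F`, the nice rule would have colored `u i` with `I`.
Hence such cycles and paths avoid the new vertices, and on `V(H)` the new coloring is `φ`. -/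

namespace SimpleGraph.Walk

variable {V : Type*} {G : SimpleGraph V}

lemma IsCycle.encard_neighborSet_toSubgraph_eq_two {a v : V} {p : G.Walk a a} (hp : p.IsCycle)
    (hv : v ∈ p.support) : (p.toSubgraph.neighborSet v).encard = 2 := by
  rw [← p.finite_neighborSet_toSubgraph.cast_ncard_eq, hp.ncard_neighborSet_toSubgraph_eq_two hv]
  rfl

lemma IsPath.encard_neighborSet_toSubgraph_eq_two {a b v : V} {p : G.Walk a b} (hp : p.IsPath)
    (hv : v ∈ p.support) (ha : v ≠ a) (hb : v ≠ b) :
    (p.toSubgraph.neighborSet v).encard = 2 := by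
  obtain ⟨i, rfl, hi⟩ := mem_support_iff_exists_getVert.mp hv
  have hi0 : i ≠ 0 := by rintro rfl; exact ha p.getVert_zero
  have hil : i < p.length := lt_of_le_of_ne hi (by rintro rfl; exact hb p.getVert_length)
  rw [← p.finite_neighborSet_toSubgraph.cast_ncard_eq,
    hp.ncard_neighborSet_toSubgraph_internal_eq_two hi0 hil]
  rfl

lemma mem_verts_of_forall_mem_edgeSet {a b x : V} {H : G.Subgraph} {p : G.Walk a b}
    (hp : ¬ p.Nil) (hpH : ∀ e ∈ p.edges, e ∈ H.edgeSet) (hx : x ∈ p.support) :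
    x ∈ H.verts := by
  obtain ⟨e, he, hxe⟩ := (mem_support_iff_exists_mem_edges_of_not_nil hp).mp hx
  exact H.mem_verts_of_mem_edge (hpH e he) hxe

end SimpleGraph.Walk

namespace IFPaper

section NiceExtension

variable {V : Type*} {G : SimpleGraph V} {A : Set V} {t : ℕ} {u : Fin t → V} {c : V → Bool}

def coloredBefore (A : Set V) (u : Fin t → V) (i : Fin t) : Set V :=
  A ∪ {x | ∃ j : Fin t, j < i ∧ x = u j}

/-- `c` is obtained from its values on `A` by nicely coloring `u 0, u 1, …` in turn. -/
structure IsNiceExtension (G : SimpleGraph V) (A : Set V) (u : Fin t → V) (c : V → Bool) :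
    Prop where
  encard_le_two : ∀ i, (coloredBefore A u i ∩ G.neighborSet (u i)).encard ≤ 2
  eq_true_iff : ∀ i, c (u i) = true ↔
    ∀ x ∈ coloredBefore A u i ∩ G.neighborSet (u i), c x = false

lemma neighborSet_subset_coloredBefore {K : G.Subgraph} (hK : K.verts ⊆ A ∪ Set.range u)
    {i : Fin t} (hlater : ∀ j, i < j → u j ∉ K.verts) :
    K.neighborSet (u i) ⊆ coloredBefore A u i ∩ G.neighborSet (u i) := by
  intro x hx
  have hxK : x ∈ K.verts := K.edge_vert hx.symm
  refine ⟨?_, K.adj_sub hx⟩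
  rcases hK hxK with hxA | ⟨j, rfl⟩
  · exact Or.inl hxA
  · have hji : j ≠ i := by rintro rfl; exact (K.adj_sub hx).ne rfl
    exact Or.inr ⟨j, lt_of_le_of_ne (not_lt.mp fun hij => hlater j hij hxK) hji, rfl⟩

namespace IsNiceExtension

theorem verts_subset (hc : IsNiceExtension G A u c) {K : G.Subgraph}
    (hK : K.verts ⊆ A ∪ Set.range u) (hF : ∀ x ∈ K.verts, c x = false)
    (h2 : ∀ i, u i ∈ K.verts → 2 ≤ (K.neighborSet (u i)).encard) : K.verts ⊆ A := by
  have hnew : ∀ i, u i ∉ K.verts := by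
    intro i
    induction i using WellFoundedGT.induction with
    | ind i hlater =>
      intro hi
      have hsub := neighborSet_subset_coloredBefore hK hlater
      have heq := (Set.finite_of_encard_le_coe (hc.encard_le_two i)).eq_of_subset_of_encard_le'
        hsub ((hc.encard_le_two i).trans (h2 i hi))
      have hnbr_false : ∀ x ∈ K.neighborSet (u i), c x = false :=
        fun x hx => hF x (K.edge_vert hx.symm)
      have htrue : c (u i) = true := (hc.eq_true_iff i).mpr (heq ▸ hnbr_false)
      simp [hF _ hi] at htrue
  intro x hx
  rcases hK hx with hxA | ⟨i, rfl⟩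
  · exact hxA
  · exact absurd hx (hnew i)

theorem support_subset (hc : IsNiceExtension G A u c) {a b : V} (p : G.Walk a b)
    (hS : ∀ x ∈ p.support, x ∈ A ∪ Set.range u) (hF : ∀ x ∈ p.support, c x = false)
    (h2 : ∀ i, u i ∈ p.support → 2 ≤ (p.toSubgraph.neighborSet (u i)).encard) :
    ∀ x ∈ p.support, x ∈ A := by
  simp_rw [← Walk.mem_verts_toSubgraph] at hS hF h2 ⊢
  exact hc.verts_subset hS hF h2

end IsNiceExtension

end NiceExtension

theorem nice_coloring_no_new_barriers_general {V : Type} (G : SimpleGraph V)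
    (H : G.Subgraph) (φ : V → Bool)
    -- `Q` is a cycle in `H`:
    {q : V} (Q : G.Walk q q) (hQ : Q.IsCycle)
    (hQH : ∀ e ∈ Q.edges, e ∈ H.edgeSet)
    -- the sequence `u 0, …, u (t-1)` of distinct vertices of `G` not in `H`:
    (t : ℕ) (u : Fin t → V)
    (hu_notH : ∀ i : Fin t, u i ∉ H.verts)
    -- each `u i` has at most two neighbors among `V(H)` and the earlier `u j`:
    (hdeg : ∀ i : Fin t,
      ((H.verts ∪ {x : V | ∃ j : Fin t, j < i ∧ x = u j}) ∩
        G.neighborSet (u i)).encard ≤ 2)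
    -- `c'` is the coloring obtained from `φ` by nicely coloring the sequence:
    (c' : V → Bool)
    (hagree : ∀ x ∈ H.verts, c' x = φ x)
    (hnice : ∀ i : Fin t, (c' (u i) = true ↔
      ∀ x ∈ (H.verts ∪ {x : V | ∃ j : Fin t, j < i ∧ x = u j}) ∩
        G.neighborSet (u i), c' x = false)) :
    -- no new F-cycles:
    (∀ (a : V) (w : G.Walk a a), w.IsCycle →
      (∀ x ∈ w.support, x ∈ H.verts ∪ Set.range u) →
      (∀ x ∈ w.support, c' x = false) →
      (∀ x ∈ w.support, x ∈ H.verts) ∧ (∀ x ∈ w.support, φ x = false)) ∧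
    -- no new splitting F-paths of Q:
    (∀ (a b : V) (p : G.Walk a b),
      (∀ x ∈ p.support, x ∈ H.verts ∪ Set.range u) →
      IsSplittingFPath G {x | x ∈ Q.support} c' p →
      (∀ x ∈ p.support, x ∈ H.verts) ∧
        IsSplittingFPath G {x | x ∈ Q.support} φ p) := by
  have hc : IsNiceExtension G H.verts u c' := ⟨hdeg, hnice⟩
  have hQ_verts : ∀ x ∈ Q.support, x ∈ H.verts := fun x =>
    Q.mem_verts_of_forall_mem_edgeSet hQ.not_nil hQH
  refine ⟨fun a w hw hwS hwF => ?_, fun a b p hpS hp => ?_⟩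
  · have hwH := hc.support_subset w hwS hwF fun i hi =>
      (hw.encard_neighborSet_toSubgraph_eq_two hi).ge
    exact ⟨hwH, fun x hx => hagree x (hwH x hx) ▸ hwF x hx⟩
  · obtain ⟨hpath, hpF, haQ, hbQ, hlen, hint⟩ := hp
    have hpH := hc.support_subset p hpS hpF fun i hi =>
      (hpath.encard_neighborSet_toSubgraph_eq_two hi (fun h => hu_notH i (h ▸ hQ_verts a haQ))
        (fun h => hu_notH i (h ▸ hQ_verts b hbQ))).ge
    exact ⟨hpH, hpath, fun x hx => hagree x (hpH x hx) ▸ hpF x hx, haQ, hbQ, hlen, hint⟩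

/-- (Nice-coloring proposition.) Let `H` be a subgraph of `G`,
`Q` a cycle in `H`, and `φ` an `(I,F)`-coloring of `H`.  If `u 0, …, u (t-1)`
are distinct vertices outside `H`, each having at most two neighbors among
`V(H)` and the earlier `u j`'s, then nicely coloring them in order (color `I`
iff no already-colored neighbor has color `I`) creates no new `F`-cycle and no
new splitting `F`-path of `Q`: in the resulting coloring `c'` of the subgraph
induced by `V(H) ∪ {u 0, …, u (t-1)}`, every `F`-cycle lies in `H.verts` and is
an `F`-cycle of `φ`, and every splitting `F`-path of `Q` lies in `H.verts` and
is a splitting `F`-path of `Q` under `φ`. -/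
theorem nice_coloring_no_new_barriers {V : Type} (G : SimpleGraph V)
    (H : G.Subgraph) (φ : V → Bool)
    -- `φ` is an (I,F)-coloring of `H`:
    (hφI : ∀ ⦃u v : V⦄, H.Adj u v → φ u = true → φ v = false)
    (hφF : ∀ (a : V) (w : G.Walk a a), w.IsCycle →
      (∀ e ∈ w.edges, e ∈ H.edgeSet) → ¬ (∀ x ∈ w.support, φ x = false))
    -- `Q` is a cycle in `H`:
    {q : V} (Q : G.Walk q q) (hQ : Q.IsCycle)
    (hQH : ∀ e ∈ Q.edges, e ∈ H.edgeSet)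
    -- the sequence `u 0, …, u (t-1)` of distinct vertices of `G` not in `H`:
    (t : ℕ) (u : Fin t → V) (hu_inj : Function.Injective u)
    (hu_notH : ∀ i : Fin t, u i ∉ H.verts)
    -- each `u i` has at most two neighbors among `V(H)` and the earlier `u j`:
    (hdeg : ∀ i : Fin t,
      ((H.verts ∪ {x : V | ∃ j : Fin t, j < i ∧ x = u j}) ∩
        G.neighborSet (u i)).encard ≤ 2)
    -- `c'` is the coloring obtained from `φ` by nicely coloring the sequence:
    (c' : V → Bool)
    (hagree : ∀ x ∈ H.verts, c' x = φ x)
    (hnice : ∀ i : Fin t, (c' (u i) = true ↔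
      ∀ x ∈ (H.verts ∪ {x : V | ∃ j : Fin t, j < i ∧ x = u j}) ∩
        G.neighborSet (u i), c' x = false)) :
    -- no new F-cycles:
    (∀ (a : V) (w : G.Walk a a), w.IsCycle →
      (∀ x ∈ w.support, x ∈ H.verts ∪ Set.range u) →
      (∀ x ∈ w.support, c' x = false) →
      (∀ x ∈ w.support, x ∈ H.verts) ∧ (∀ x ∈ w.support, φ x = false)) ∧
    -- no new splitting F-paths of Q:
    (∀ (a b : V) (p : G.Walk a b),
      (∀ x ∈ p.support, x ∈ H.verts ∪ Set.range u) →
      IsSplittingFPath G {x | x ∈ Q.support} c' p →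
      (∀ x ∈ p.support, x ∈ H.verts) ∧
        IsSplittingFPath G {x | x ∈ Q.support} φ p) :=
  nice_coloring_no_new_barriers_general G H φ Q hQ hQH t u hu_notH hdeg c' hagree hnice

end IFPaper
end

section
/- Let (G, C0, φ0) be a minimal counterexample to the extension theorem (minimizing |V(G)| + |E(G)|), with G embedded in the plane so that the chordless cycle C0 bounds the outer face. Then G contains no separating good cycle of length at most 9, where a cycle C of the plane graph G is separating if both the interior and the exterior of C contain at least one vertex of G. -/
open SimpleGraph

namespace IFPaper

variable {V : Type}

/-!
Let `I` be the set of vertices strictly inside the separating cycle `C`. A neighbour of a vertex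
of `I` lies in `I` or on `C`, so `C` separates `I` from the rest of `G`, and deleting `I`, or
everything outside `C`, preserves `d* ≥ 3` because detours can be rerouted along `C`. Both
deletions remove a vertex, so by minimality the precoloring of `C0` extends to a super IF-coloring
`ψ` of `G - I`, and the restriction of `ψ` to the good cycle `C` extends to a super IF-coloring
`χ` of `G[I ∪ V(C)]`. Gluing `χ` on `I` to `ψ` elsewhere gives a super IF-coloring of `(G, C0)`:
an `F`-cycle or splitting `F`-path meeting `I` would contain a subpath crossing `I` between two
vertices of `C`, that is, a splitting `F`-path of `C` for `χ`.
-/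

/-- A super IF-coloring of `(G[S], Q)`, stated on all of `V`. -/
def SuperIFColoringOn (G : SimpleGraph V) (S Q : Set V) (c : V → Bool) : Prop :=
  IFColoringOn G S c ∧
    ∀ ⦃a b : V⦄ (p : G.Walk a b), (∀ z ∈ p.support, z ∈ S) → ¬ IsSplittingFPath G Q c p

theorem IFColoringOn.mono {G : SimpleGraph V} {S T : Set V} {c : V → Bool}
    (h : IFColoringOn G S c) (hTS : T ⊆ S) : IFColoringOn G T c :=
  ⟨fun _ _ hu hv => h.1 (hTS hu) (hTS hv), fun v w hw hT => h.2 v w hw fun z hz => hTS (hT z hz)⟩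

section Embedding

variable {W : Type} {K : SimpleGraph W} {G : SimpleGraph V}

lemma mem_support_map_iff (f : K ↪g G) {u v : W} (w : K.Walk u v) {x : W} :
    f x ∈ (w.map f.toHom).support ↔ x ∈ w.support := by
  rw [Walk.support_map]
  exact List.mem_map_of_injective f.injective

theorem exists_walk_map_eq (f : K ↪g G) :
    ∀ {u v : V} (w : G.Walk u v), (∀ z ∈ w.support, z ∈ Set.range f) →
      ∃ (u' v' : W) (w' : K.Walk u' v') (hu : f u' = u) (hv : f v' = v),
        (w'.map f.toHom).copy hu hv = w
  | _, _, .nil, hw => by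
    obtain ⟨u', rfl⟩ := hw _ (List.mem_singleton_self _)
    exact ⟨u', u', .nil, rfl, rfl, rfl⟩
  | _, _, .cons h w, hw => by
    obtain ⟨u', rfl⟩ := hw _ w.support.mem_cons_self
    obtain ⟨x', v', w', rfl, rfl, rfl⟩ :=
      exists_walk_map_eq f w fun z hz => hw z (List.mem_cons_of_mem _ hz)
    exact ⟨u', v', .cons (f.map_adj_iff.1 h) w', rfl, rfl, rfl⟩

theorem exists_cycle_map_eq (f : K ↪g G) {u : V} (w : G.Walk u u)
    (hw : ∀ z ∈ w.support, z ∈ Set.range f) :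
    ∃ (u' : W) (w' : K.Walk u' u') (hu : f u' = u), (w'.map f.toHom).copy hu hu = w := by
  obtain ⟨u', v', w', hu, hv, rfl⟩ := exists_walk_map_eq f w hw
  obtain rfl : v' = u' := f.injective (hv.trans hu.symm)
  exact ⟨_, w', hu, rfl⟩

theorem IsPlanarGraph.of_embedding (f : K ↪g G) (h : IsPlanarGraph G) : IsPlanarGraph K := by
  obtain ⟨vtx, arc, he⟩ := h
  refine ⟨vtx ∘ f, fun i j => arc (f i) (f j),
    ⟨he.vtx_inj.comp f.injective, fun _ _ h => he.arc_cont (f.map_adj_iff.2 h),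
      fun _ _ h => he.arc_injOn (f.map_adj_iff.2 h),
      fun _ _ h => he.arc_start (f.map_adj_iff.2 h), fun _ _ h => he.arc_end (f.map_adj_iff.2 h),
      fun _ _ h => he.arc_symm (f.map_adj_iff.2 h),
      fun _ _ h w => he.arc_avoids_vtx (f.map_adj_iff.2 h) (f w), ?_⟩⟩
  intro u v u' v' h h' hne
  refine he.arc_disjoint (f.map_adj_iff.2 h) (f.map_adj_iff.2 h') fun heq => hne ?_
  apply Sym2.map.injective f.injective
  rwa [Sym2.map_mk, Sym2.map_mk]

theorem IsBadCycle.map (f : K ↪g G) {v : W} {C : K.Walk v v} (h : IsBadCycle K C) :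
    IsBadCycle G (C.map f.toHom) := by
  obtain ⟨hC, hlen, hclaw | htri⟩ := h
  all_goals refine ⟨hC.map f.injective, by rw [Walk.length_map, hlen], ?_⟩
  · obtain ⟨x, hx, a, b, c, ha, hb, hc, hab, hac, hbc, hxa, hxb, hxc⟩ := hclaw
    refine .inl ⟨f x, (mem_support_map_iff f C).not.2 hx, f a, f b, f c,
      (mem_support_map_iff f C).2 ha, (mem_support_map_iff f C).2 hb,
      (mem_support_map_iff f C).2 hc, f.injective.ne hab, f.injective.ne hac,
      f.injective.ne hbc, f.map_adj_iff.2 hxa, f.map_adj_iff.2 hxb, f.map_adj_iff.2 hxc⟩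
  · obtain ⟨x, y, z, hx, hy, hz, hxy, hyz, hxz, a, b, c, ha, hb, hc, hab, hac, hbc,
      hxa, hyb, hzc⟩ := htri
    refine .inr ⟨f x, f y, f z, (mem_support_map_iff f C).not.2 hx,
      (mem_support_map_iff f C).not.2 hy, (mem_support_map_iff f C).not.2 hz,
      f.map_adj_iff.2 hxy, f.map_adj_iff.2 hyz, f.map_adj_iff.2 hxz, f a, f b, f c,
      (mem_support_map_iff f C).2 ha, (mem_support_map_iff f C).2 hb,
      (mem_support_map_iff f C).2 hc, f.injective.ne hab, f.injective.ne hac,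
      f.injective.ne hbc, f.map_adj_iff.2 hxa, f.map_adj_iff.2 hyb, f.map_adj_iff.2 hzc⟩

theorem IFColoringOn.comap (f : K ↪g G) {S : Set V} {c : V → Bool} (h : IFColoringOn G S c) :
    IFColoringOn K (f ⁻¹' S) (c ∘ f) := by
  refine ⟨fun u v hu hv huv hc => h.1 hu hv (f.map_adj_iff.2 huv) hc, ?_⟩
  intro v w hw hS hF
  refine h.2 _ (w.map f.toHom) (hw.map f.injective) ?_ ?_ <;>
    simpa only [Walk.support_map, List.forall_mem_map] using ‹_›

theorem Cycles5Apart.comap (f : K ↪g G) (h : Cycles5Apart G)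
    (hreach : ∀ x y, G.Reachable (f x) (f y) → K.Reachable x y) : Cycles5Apart K := by
  intro u v c1 c2 hc1 hc2 hl1 hl2 hne x hx y hy
  have hG : 3 ≤ G.dist (f x) (f y) := by
    refine h (c1.map f.toHom) (c2.map f.toHom) (hc1.map f.injective) (hc2.map f.injective)
      (by rwa [Walk.length_map]) (by rwa [Walk.length_map]) ?_ _
      ((mem_support_map_iff f c1).2 hx) _ ((mem_support_map_iff f c2).2 hy)
    intro heq
    refine hne (Set.image_injective.2 (Sym2.map.injective f.injective) ?_)
    simp only [Walk.edges_map, List.mem_map] at heq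
    exact heq
  obtain ⟨w, hw⟩ :=
    (hreach x y (Reachable.of_dist_ne_zero (by omega))).exists_walk_length_eq_dist
  calc 3 ≤ G.dist (f x) (f y) := hG
    _ ≤ (w.map f.toHom).length := dist_le _
    _ = K.dist x y := by rw [Walk.length_map, hw]

theorem SuperIFColoring.exists_superIFColoringOn_range (f : K ↪g G) {Q : Set V}
    {c : W → Bool} (h : SuperIFColoring K (f ⁻¹' Q) c) :
    ∃ c' : V → Bool, SuperIFColoringOn G (Set.range f) Q c' ∧ ∀ x, c' (f x) = c x := by
  set c' := Function.extend f c fun _ => true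
  have hc' : ∀ x, c' (f x) = c x := f.injective.extend_apply c _
  refine ⟨c', ⟨⟨?_, ?_⟩, ?_⟩, hc'⟩
  · rintro _ _ ⟨u, rfl⟩ ⟨v, rfl⟩ huv hu
    rw [hc'] at hu ⊢
    exact h.1.1 (f.map_adj_iff.1 huv) hu
  · intro v w hw hS hF
    obtain ⟨u, w', rfl, rfl⟩ := exists_cycle_map_eq f w fun z hz => hS z hz
    simp only [Walk.copy_rfl_rfl, Walk.support_map, List.forall_mem_map] at hw hF
    refine h.1.2 u w' (Walk.isCycle_map_iff_of_injective f.injective |>.1 hw) fun x hx => ?_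
    rw [← hc']
    exact hF x hx
  · intro a b p hS ⟨hp, hF, ha, hb, hlen, hin⟩
    obtain ⟨a', b', p', rfl, rfl, rfl⟩ := exists_walk_map_eq f p hS
    simp only [Walk.copy_rfl_rfl, Walk.support_map, List.forall_mem_map, Walk.length_map] at *
    refine h.2 a' b' p' ⟨Walk.isPath_map_iff_of_injective f.injective |>.1 hp,
      fun x hx => (hc' x).symm.trans (hF x hx), ha, hb, hlen, fun x hx hxa hxb => ?_⟩
    exact hin x hx (f.injective.ne hxa) (f.injective.ne hxb)

theorem isCounterexample_comap (f : K ↪g G) (hpl : IsPlanarGraph G) (h5 : Cycles5Apart G)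
    (hreach : ∀ x y, G.Reachable (f x) (f y) → K.Reachable x y)
    {u : W} (C : K.Walk u u) (hC : IsGoodCycle G (C.map f.toHom)) (hlen : C.length ≤ 9)
    {φ : V → Bool} (hφ : IFColoringOn G {x | x ∈ (C.map f.toHom).support} φ)
    (hext : ¬ ∃ c, SuperIFColoringOn G (Set.range f) {x | x ∈ (C.map f.toHom).support} c ∧
      ∀ x ∈ (C.map f.toHom).support, c x = φ x) :
    IsCounterexample K C (φ ∘ f) := by
  have hpre : f ⁻¹' {x | x ∈ (C.map f.toHom).support} = {x | x ∈ C.support} :=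
    Set.ext fun x => mem_support_map_iff f C
  refine ⟨hpl.of_embedding f, h5.comap f hreach,
    ⟨(Walk.isCycle_map_iff_of_injective f.injective).1 hC.1, fun hbad => hC.2 (hbad.map f)⟩,
    hlen, hpre ▸ hφ.comap f, ?_⟩
  rintro ⟨c, hc, hcφ⟩
  obtain ⟨c', hc', hc'c⟩ := SuperIFColoring.exists_superIFColoringOn_range f (hpre ▸ hc)
  refine hext ⟨c', hc', fun x hx => ?_⟩
  rw [Walk.support_map, List.mem_map] at hx
  obtain ⟨y, hy, rfl⟩ := hx
  exact (hc'c y).trans (hcφ y hy)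

end Embedding

theorem graphSize_comap_lt [Fintype V] {W : Type} [Fintype W] (G : SimpleGraph V) (d : W ↪ V)
    (hd : ¬ Function.Surjective d) : graphSize (G.comap d) < graphSize G := by
  have hV : Fintype.card W < Fintype.card V :=
    Fintype.card_lt_of_injective_not_surjective d d.injective hd
  have hE : (G.comap d).edgeSet.ncard ≤ G.edgeSet.ncard :=
    Nat.card_le_card_of_injective _ (Embedding.comap d G).mapEdgeSet.injective
  unfold graphSize
  omega

theorem IsMinimalCounterexample.exists_superIFColoringOn [Fintype V] {G : SimpleGraph V}
    {v0 : V} {C0 : G.Walk v0 v0} {φ0 : V → Bool} (hmin : IsMinimalCounterexample G C0 φ0)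
    {P : Set V} {w0 : V} (hw0 : w0 ∉ P)
    (hreach : ∀ ⦃x y⦄, x ∈ P → y ∈ P → G.Reachable x y →
      ∃ w : G.Walk x y, ∀ z ∈ w.support, z ∈ P)
    {q : V} (Q : G.Walk q q) (hQ : IsGoodCycle G Q) (hQlen : Q.length ≤ 9)
    (hQP : ∀ z ∈ Q.support, z ∈ P) {φ : V → Bool} (hφ : IFColoringOn G {x | x ∈ Q.support} φ) :
    ∃ c, SuperIFColoringOn G P {x | x ∈ Q.support} c ∧ ∀ x ∈ Q.support, c x = φ x := by
  classical
  -- minimality only speaks about graphs on some `Fin n`, so `G[P]` is moved to `Fin |P|`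
  let d : Fin (Fintype.card P) ↪ V := (Fintype.equivFin P).symm.toEmbedding.trans (.subtype _)
  let f := Embedding.comap d G
  have hrange : Set.range f = P := by
    ext x
    refine ⟨?_, fun hx => ⟨Fintype.equivFin P ⟨x, hx⟩, by simp [f, d]⟩⟩
    rintro ⟨y, rfl⟩
    exact Subtype.prop _
  rw [← hrange] at hw0 hreach hQP ⊢
  obtain ⟨q', Q', rfl, rfl⟩ := exists_cycle_map_eq f Q hQP
  by_contra hext
  refine (graphSize_comap_lt G d ?_).not_ge (hmin.2 _ _ _ Q' _ (isCounterexample_comap f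
    hmin.1.1 hmin.1.2.1 ?_ Q' (by simpa using hQ) (by simpa using hQlen) (by simpa using hφ)
    (by simpa using hext)))
  · exact fun hs => hw0 (hs w0)
  · intro x y h
    obtain ⟨w, hw⟩ := hreach ⟨x, rfl⟩ ⟨y, rfl⟩ h
    obtain ⟨x', y', w', hx, hy, -⟩ := exists_walk_map_eq f w hw
    rw [← f.injective hx, ← f.injective hy]
    exact ⟨w'⟩

/-- A detour of a walk outside `P` can be replaced by a detour along `B`. -/
theorem exists_walk_within_of_boundary {G : SimpleGraph V} {P : Set V} {b b' : V}
    (B : G.Walk b b') (hBP : ∀ z ∈ B.support, z ∈ P)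
    (hbd : ∀ ⦃x y⦄, G.Adj x y → x ∉ P → y ∈ P → y ∈ B.support)
    {x y : V} (hx : x ∈ P) (hy : y ∈ P) (h : G.Reachable x y) :
    ∃ w : G.Walk x y, ∀ z ∈ w.support, z ∈ P := by
  classical
  have hb : b ∈ P := hBP b B.start_mem_support
  have hB : ∀ z (hz : z ∈ B.support), (G.induce P).Reachable ⟨b, hb⟩ ⟨z, hBP z hz⟩ :=
    fun z hz => ⟨(B.takeUntil z hz).induce P fun u hu =>
      hBP u (B.support_takeUntil_subset_support hz hu)⟩
  have key : ∀ {u y : V} (hy : y ∈ P) (w : G.Walk u y),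
      (∀ hu : u ∈ P, (G.induce P).Reachable ⟨u, hu⟩ ⟨y, hy⟩) ∧
        (u ∉ P → (G.induce P).Reachable ⟨b, hb⟩ ⟨y, hy⟩) := by
    intro u y hy w
    induction w with
    | nil => exact ⟨fun _ => .rfl, fun hu => absurd hy hu⟩
    | @cons u v _ huv _ ih =>
      specialize ih hy
      refine ⟨fun hu => ?_, fun hu => ?_⟩ <;> by_cases hv : v ∈ P
      · exact (induce_adj.2 huv : (G.induce P).Adj ⟨u, hu⟩ ⟨v, hv⟩).reachable.trans (ih.1 hv)
      · exact (hB u (hbd huv.symm hv hu)).symm.trans (ih.2 hv)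
      · exact (hB v (hbd huv hu hv)).trans (ih.1 hv)
      · exact ih.2 hv
  obtain ⟨w⟩ := h
  obtain ⟨w'⟩ := (key hy w).1 hx
  refine ⟨w'.map (Embedding.induce P).toHom, fun z hz => ?_⟩
  erw [Walk.support_map] at hz
  obtain ⟨z', -, rfl⟩ := List.mem_map.1 hz
  exact z'.2

section Crossing

variable {G : SimpleGraph V} {I B : Set V}

theorem exists_exit_prefix (hsep : ∀ ⦃x y⦄, G.Adj x y → x ∈ I → y ∈ I ∨ y ∈ B) :
    ∀ {u b : V} (p : G.Walk u b), u ∈ I → b ∉ I →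
      ∃ a ∈ B, ∃ (r : G.Walk u a) (t : G.Walk a b),
        r.append t = p ∧ r.length ≠ 0 ∧ ∀ z ∈ r.support, z ≠ a → z ∈ I
  | _, _, .nil, hu, hb => absurd hu hb
  | _, _, .cons h p, hu, hb => by
    rcases hsep h hu with hv | hv
    · obtain ⟨a, ha, r, t, rfl, -, hr⟩ := exists_exit_prefix hsep p hv hb
      refine ⟨a, ha, .cons h r, t, rfl, by simp, fun z hz hza => ?_⟩
      rcases List.mem_cons.1 hz with rfl | hz
      exacts [hu, hr z hz hza]
    · refine ⟨_, hv, .cons h .nil, p, rfl, by simp, fun z hz hzv => ?_⟩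
      simp only [Walk.support_cons, Walk.support_nil, List.mem_pair] at hz
      rcases hz with rfl | rfl
      exacts [hu, absurd rfl hzv]

theorem exists_crossing_subpath (hsep : ∀ ⦃x y⦄, G.Adj x y → x ∈ I → y ∈ I ∨ y ∈ B)
    {a b s : V} {p : G.Walk a b} (hp : p.IsPath) (ha : a ∉ I) (hb : b ∉ I)
    (hs : s ∈ p.support) (hsI : s ∈ I) :
    ∃ (a₁ a₂ : V) (q : G.Walk a₁ a₂), a₁ ∈ B ∧ a₂ ∈ B ∧ q.IsPath ∧ 2 ≤ q.length ∧
      (∀ z ∈ q.support, z ∈ p.support) ∧ ∀ z ∈ q.support, z ≠ a₁ → z ≠ a₂ → z ∈ I := by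
  classical
  obtain ⟨a₁, ha₁, r₁, t₁, hr₁, hl₁, hin₁⟩ :=
    exists_exit_prefix hsep (p.takeUntil s hs).reverse hsI ha
  obtain ⟨a₂, ha₂, r₂, t₂, hr₂, hl₂, hin₂⟩ := exists_exit_prefix hsep (p.dropUntil s hs) hsI hb
  have hpq : t₁.reverse.append ((r₁.reverse.append r₂).append t₂) = p := by
    rw [← Walk.append_assoc, Walk.append_assoc, ← Walk.reverse_append, hr₁,
      Walk.reverse_reverse, hr₂, Walk.take_spec]
  have hsub : ∀ z ∈ (r₁.reverse.append r₂).support, z ∈ p.support := fun z hz => by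
    rw [← hpq, Walk.mem_support_append_iff, Walk.mem_support_append_iff]
    exact .inr (.inl hz)
  refine ⟨a₁, a₂, r₁.reverse.append r₂, ha₁, ha₂, ?_, ?_, hsub, fun z hz hz₁ hz₂ => ?_⟩
  · rw [← hpq] at hp
    exact hp.of_append_right.of_append_left
  · rw [Walk.length_append, Walk.length_reverse]
    omega
  · rw [Walk.mem_support_append_iff, Walk.support_reverse, List.mem_reverse] at hz
    exact hz.elim (hin₁ z · hz₁) (hin₂ z · hz₂)

end Crossing

theorem exists_isPath_through_of_isCycle {G : SimpleGraph V} {v : V} {w : G.Walk v v}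
    (hw : w.IsCycle) {s t : V} (hs : s ∈ w.support) (ht : t ∈ w.support) (hst : s ≠ t) :
    ∃ (x : V) (p : G.Walk x t), G.Adj t x ∧ p.IsPath ∧ s ∈ p.support ∧
      ∀ z ∈ p.support, z ∈ w.support := by
  classical
  have hrot := hw.rotate ht
  have hmem : ∀ z, z ∈ (w.rotate t ht).support ↔ z ∈ w.support :=
    fun z => Walk.mem_support_rotate_iff w t ht
  generalize w.rotate t ht = W at hrot hmem
  cases W with
  | nil => exact absurd hrot Walk.not_isCycle_nil
  | cons h p =>
    simp only [Walk.support_cons, List.mem_cons] at hmem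
    refine ⟨_, p, h, ((Walk.cons_isCycle_iff p h).1 hrot).1, ?_,
      fun z hz => (hmem z).1 (.inr hz)⟩
    exact ((hmem s).2 hs).resolve_left hst

section Gluing

variable {G : SimpleGraph V} {I B : Set V} [DecidablePred (· ∈ I)] {ψ χ : V → Bool}

lemma piecewise_eq_of_mem_union (hB : ∀ x ∈ B, x ∉ I) (hχψ : ∀ x ∈ B, χ x = ψ x) {x : V}
    (hx : x ∈ I ∪ B) : I.piecewise χ ψ x = χ x := by
  rcases hx with hx | hx
  · exact Set.piecewise_eq_of_mem _ _ _ hx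
  · exact (Set.piecewise_eq_of_notMem _ _ _ (hB x hx)).trans (hχψ x hx).symm

theorem SuperIFColoringOn.forall_notMem_of_isPath
    (hsep : ∀ ⦃x y⦄, G.Adj x y → x ∈ I → y ∈ I ∨ y ∈ B) (hB : ∀ x ∈ B, x ∉ I)
    (hχ : SuperIFColoringOn G (I ∪ B) B χ) (hχψ : ∀ x ∈ B, χ x = ψ x)
    {a b : V} {p : G.Walk a b} (hp : p.IsPath) (ha : a ∉ I) (hb : b ∉ I)
    (hF : ∀ z ∈ p.support, I.piecewise χ ψ z = false) : ∀ z ∈ p.support, z ∉ I := by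
  intro s hs hsI
  obtain ⟨a₁, a₂, q, ha₁, ha₂, hq, hlen, hsub, hin⟩ :=
    exists_crossing_subpath hsep hp ha hb hs hsI
  have hqI : ∀ z ∈ q.support, z ∈ I ∪ B := fun z hz => by
    by_cases hz₁ : z = a₁
    · exact .inr (hz₁ ▸ ha₁)
    by_cases hz₂ : z = a₂
    · exact .inr (hz₂ ▸ ha₂)
    exact .inl (hin z hz hz₁ hz₂)
  refine hχ.2 q hqI ⟨hq, fun z hz => ?_, ha₁, ha₂, hlen,
    fun z hz hz₁ hz₂ hzB => hB z hzB (hin z hz hz₁ hz₂)⟩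
  rw [← piecewise_eq_of_mem_union hB hχψ (hqI z hz)]
  exact hF z (hsub z hz)

theorem SuperIFColoringOn.ifColoring_piecewise
    (hsep : ∀ ⦃x y⦄, G.Adj x y → x ∈ I → y ∈ I ∨ y ∈ B) (hB : ∀ x ∈ B, x ∉ I)
    (hψ : IFColoringOn G Iᶜ ψ) (hχ : SuperIFColoringOn G (I ∪ B) B χ)
    (hχψ : ∀ x ∈ B, χ x = ψ x) : IFColoring G (I.piecewise χ ψ) := by
  have hcχ : ∀ x ∈ I ∪ B, I.piecewise χ ψ x = χ x :=
    fun _ => piecewise_eq_of_mem_union hB hχψ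
  have hcψ : ∀ x ∉ I, I.piecewise χ ψ x = ψ x := fun _ => Set.piecewise_eq_of_notMem _ _ _
  refine ⟨fun u v huv hu => ?_, fun v w hw hF => ?_⟩
  · by_cases h : u ∈ I ∨ v ∈ I
    · have hI : u ∈ I ∪ B ∧ v ∈ I ∪ B :=
        h.elim (fun h => ⟨.inl h, hsep huv h⟩) fun h => ⟨hsep huv.symm h, .inl h⟩
      rw [hcχ u hI.1] at hu
      rw [hcχ v hI.2]
      exact hχ.1.1 hI.1 hI.2 huv hu
    · obtain ⟨hu', hv'⟩ := not_or.1 h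
      rw [hcψ u hu'] at hu
      rw [hcψ v hv']
      exact hψ.1 hu' hv' huv hu
  by_cases hout : ∀ z ∈ w.support, z ∉ I
  · exact hψ.2 v w hw hout fun z hz => (hcψ z (hout z hz)).symm.trans (hF z hz)
  by_cases hin : ∀ z ∈ w.support, z ∈ I ∪ B
  · exact hχ.1.2 v w hw hin fun z hz => (hcχ z (hin z hz)).symm.trans (hF z hz)
  obtain ⟨s, hs, hsI⟩ : ∃ s ∈ w.support, s ∈ I := by simpa using hout
  obtain ⟨t, ht, htI⟩ : ∃ t ∈ w.support, t ∉ I ∪ B := by simpa using hin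
  obtain ⟨x, p, htx, hp, hsp, hpw⟩ :=
    exists_isPath_through_of_isCycle hw hs ht fun hst => htI (.inl (hst ▸ hsI))
  exact hχ.forall_notMem_of_isPath hsep hB hχψ hp (fun hx => htI (hsep htx.symm hx))
    (fun h => htI (.inl h)) (fun z hz => hF z (hpw z hz)) s hsp hsI

/-- An `F`-cycle or splitting `F`-path of the glued coloring would have to cross `I`, and the
crossing would be a splitting `F`-path of `B` for `χ`. -/
theorem SuperIFColoringOn.superIFColoring_piecewise
    (hsep : ∀ ⦃x y⦄, G.Adj x y → x ∈ I → y ∈ I ∨ y ∈ B) (hB : ∀ x ∈ B, x ∉ I)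
    {Q : Set V} (hQ : ∀ x ∈ Q, x ∉ I) (hψ : SuperIFColoringOn G Iᶜ Q ψ)
    (hχ : SuperIFColoringOn G (I ∪ B) B χ) (hχψ : ∀ x ∈ B, χ x = ψ x) :
    SuperIFColoring G Q (I.piecewise χ ψ) := by
  refine ⟨hχ.ifColoring_piecewise hsep hB hψ.1 hχψ,
    fun a b p ⟨hp, hF, ha, hb, hlen, hin⟩ => ?_⟩
  have hout := hχ.forall_notMem_of_isPath hsep hB hχψ hp (hQ a ha) (hQ b hb) hF
  refine hψ.2 p hout ⟨hp, fun z hz => ?_, ha, hb, hlen, hin⟩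
  rw [← Set.piecewise_eq_of_notMem I χ ψ (hout z hz)]
  exact hF z hz

end Gluing

section Drawing

variable {G : SimpleGraph V} {vtx : V → ℝ × ℝ} {arc : V → V → ℝ → ℝ × ℝ}

lemma mem_walkDrawing_iff {a b : V} {w : G.Walk a b} {p : ℝ × ℝ} :
    p ∈ WalkDrawing G arc w ↔
      ∃ x y, G.Adj x y ∧ s(x, y) ∈ w.edges ∧ p ∈ ArcImage (arc x y) := by
  simp only [WalkDrawing, Set.mem_iUnion, exists_prop]

lemma vtx_mem_arcImage_left (hemb : IsPlaneEmbedding G vtx arc) {u v : V} (h : G.Adj u v) :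
    vtx u ∈ ArcImage (arc u v) :=
  ⟨0, by norm_num, hemb.arc_start h⟩

lemma vtx_mem_arcImage_right (hemb : IsPlaneEmbedding G vtx arc) {u v : V} (h : G.Adj u v) :
    vtx v ∈ ArcImage (arc u v) :=
  ⟨1, by norm_num, hemb.arc_end h⟩

lemma mem_arcImage_iff (hemb : IsPlaneEmbedding G vtx arc) {u v : V} (h : G.Adj u v)
    {p : ℝ × ℝ} :
    p ∈ ArcImage (arc u v) ↔ p ∈ ArcInterior (arc u v) ∨ p = vtx u ∨ p = vtx v := by
  refine ⟨?_, ?_⟩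
  · rintro ⟨t, ⟨h0, h1⟩, rfl⟩
    rcases h0.eq_or_lt with rfl | h0
    · exact .inr (.inl (hemb.arc_start h))
    rcases h1.lt_or_eq with h1 | rfl
    · exact .inl ⟨t, ⟨h0, h1⟩, rfl⟩
    · exact .inr (.inr (hemb.arc_end h))
  · rintro (⟨t, ht, rfl⟩ | rfl | rfl)
    exacts [⟨t, Set.Ioo_subset_Icc_self ht, rfl⟩, vtx_mem_arcImage_left hemb h,
      vtx_mem_arcImage_right hemb h]

lemma eq_vtx_of_mem_arcImage_inter (hemb : IsPlaneEmbedding G vtx arc) {u v x y : V}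
    (huv : G.Adj u v) (hxy : G.Adj x y) (hne : s(u, v) ≠ s(x, y)) {p : ℝ × ℝ}
    (hp : p ∈ ArcImage (arc u v)) (hp' : p ∈ ArcImage (arc x y)) :
    ∃ z, p = vtx z ∧ (z = u ∨ z = v) ∧ (z = x ∨ z = y) := by
  rcases (mem_arcImage_iff hemb huv).1 hp with hint | h | h <;>
    rcases (mem_arcImage_iff hemb hxy).1 hp' with hint' | h' | h'
  · exact ((Set.mem_empty_iff_false p).1
      ((hemb.arc_disjoint huv hxy hne).subset ⟨hint, hint'⟩)).elim
  all_goals first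
    | exact absurd (h' ▸ hint) (hemb.arc_avoids_vtx huv _)
    | exact absurd (h ▸ hint') (hemb.arc_avoids_vtx hxy _)
    | exact ⟨_, h, by simp, by simp [hemb.vtx_inj (h.symm.trans h')]⟩

lemma vtx_mem_walkDrawing (hemb : IsPlaneEmbedding G vtx arc) {a b : V} {w : G.Walk a b}
    (hw : ¬ w.Nil) {x : V} (hx : x ∈ w.support) : vtx x ∈ WalkDrawing G arc w := by
  obtain ⟨e, he, hxe⟩ := (Walk.mem_support_iff_exists_mem_edges_of_not_nil hw).1 hx
  induction e using Sym2.ind with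
  | _ u v =>
    have huv : G.Adj u v := w.adj_of_mem_edges he
    rcases Sym2.mem_iff.1 hxe with rfl | rfl
    · exact mem_walkDrawing_iff.2 ⟨x, v, huv, he, vtx_mem_arcImage_left hemb huv⟩
    · exact mem_walkDrawing_iff.2 ⟨u, x, huv, he, vtx_mem_arcImage_right hemb huv⟩

lemma mem_support_of_vtx_mem_walkDrawing (hemb : IsPlaneEmbedding G vtx arc) {a b : V}
    {w : G.Walk a b} {x : V} (hx : vtx x ∈ WalkDrawing G arc w) : x ∈ w.support := by
  obtain ⟨u, v, huv, he, hmem⟩ := mem_walkDrawing_iff.1 hx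
  rcases (mem_arcImage_iff hemb huv).1 hmem with hint | h | h
  · exact absurd hint (hemb.arc_avoids_vtx huv x)
  · exact hemb.vtx_inj h ▸ w.fst_mem_support_of_mem_edges he
  · exact hemb.vtx_inj h ▸ w.snd_mem_support_of_mem_edges he

lemma arcImage_subset_compl_walkDrawing (hemb : IsPlaneEmbedding G vtx arc) {a b : V}
    {w : G.Walk a b} {u v : V} (huv : G.Adj u v) (hu : u ∉ w.support) (hv : v ∉ w.support) :
    ArcImage (arc u v) ⊆ (WalkDrawing G arc w)ᶜ := by
  intro p hp hpw
  obtain ⟨x, y, hxy, he, hp'⟩ := mem_walkDrawing_iff.1 hpw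
  have hne : s(u, v) ≠ s(x, y) := fun h => hu (w.fst_mem_support_of_mem_edges (h ▸ he))
  obtain ⟨z, -, hz, hz'⟩ := eq_vtx_of_mem_arcImage_inter hemb huv hxy hne hp hp'
  have hzw : z ∈ w.support := hz'.elim (· ▸ w.fst_mem_support_of_mem_edges he)
    (· ▸ w.snd_mem_support_of_mem_edges he)
  exact hz.elim (fun h => hu (h ▸ hzw)) fun h => hv (h ▸ hzw)

lemma walkDrawing_isClosed [Finite V] (hemb : IsPlaneEmbedding G vtx arc) {a b : V}
    (w : G.Walk a b) : IsClosed (WalkDrawing G arc w) := by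
  refine isClosed_iUnion_of_finite fun u => isClosed_iUnion_of_finite fun v =>
    isClosed_iUnion_of_finite fun huv => isClosed_iUnion_of_finite fun _ => ?_
  exact (isCompact_Icc.image_of_continuousOn (hemb.arc_cont huv)).isClosed

lemma not_vertexInsideCycle_of_mem_support (hemb : IsPlaneEmbedding G vtx arc) {a : V}
    {C : G.Walk a a} (hC : ¬ C.Nil) {x : V} (hx : x ∈ C.support) :
    ¬ VertexInsideCycle G vtx arc C x :=
  fun h => h.1 (vtx_mem_walkDrawing hemb hC hx)

/-- The arc of an edge off `C` is a connected set avoiding the drawing of `C`, so it stays in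
the component of its ends. -/
lemma vertexInsideCycle_or_mem_support_of_adj (hemb : IsPlaneEmbedding G vtx arc) {a : V}
    {C : G.Walk a a} (hC : ¬ C.Nil) {u v : V} (huv : G.Adj u v)
    (hu : VertexInsideCycle G vtx arc C u) :
    VertexInsideCycle G vtx arc C v ∨ v ∈ C.support := by
  refine or_iff_not_imp_right.2 fun hv =>
    ⟨fun h => hv (mem_support_of_vtx_mem_walkDrawing hemb h), ?_⟩
  have hsub := arcImage_subset_compl_walkDrawing hemb huv
    (fun h => not_vertexInsideCycle_of_mem_support hemb hC h hu) hv
  have hconn : IsPreconnected (ArcImage (arc u v)) :=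
    isPreconnected_Icc.image _ (hemb.arc_cont huv)
  rw [← connectedComponentIn_eq (hconn.subset_connectedComponentIn
    (vtx_mem_arcImage_left hemb huv) hsub (vtx_mem_arcImage_right hemb huv))]
  exact hu.2

/-- Otherwise the outer face, which accumulates at the vertex, would be trapped in the bounded
component of the complement of `C` containing it. -/
lemma not_vertexInsideCycle_of_mem_frontier [Finite V] (hemb : IsPlaneEmbedding G vtx arc)
    {D : Set (ℝ × ℝ)} (hD : IsOuterFace G vtx arc D) {a : V} (C : G.Walk a a) {x : V}
    (hx : vtx x ∈ frontier D) : ¬ VertexInsideCycle G vtx arc C x := by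
  rintro ⟨hxC, hbdd⟩
  obtain ⟨⟨p, hp, rfl⟩, hunb⟩ := hD
  set U := connectedComponentIn (WalkDrawing G arc C)ᶜ (vtx x)
  have hUopen : IsOpen U := (walkDrawing_isClosed hemb C).isOpen_compl.connectedComponentIn
  obtain ⟨d, hdU, hdD⟩ := mem_closure_iff.1 (frontier_subset_closure hx) U hUopen
    (mem_connectedComponentIn hxC)
  have hDC : connectedComponentIn (Drawing G vtx arc)ᶜ p ⊆ (WalkDrawing G arc C)ᶜ := by
    refine (connectedComponentIn_subset _ _).trans (Set.compl_subset_compl.2 fun q hq => ?_)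
    obtain ⟨u, v, huv, -, hq⟩ := mem_walkDrawing_iff.1 hq
    exact .inr (Set.mem_iUnion₂.2 ⟨u, v, Set.mem_iUnion.2 ⟨huv, hq⟩⟩)
  refine hunb (hbdd.subset ?_)
  rw [show U = _ from connectedComponentIn_eq hdU]
  exact isPreconnected_connectedComponentIn.subset_connectedComponentIn hdD hDC

end Drawing

theorem no_separating_good_cycle_general {V : Type} [Fintype V] (G : SimpleGraph V)
    {v0 : V} (C0 : G.Walk v0 v0) (φ0 : V → Bool)
    (hmin : IsMinimalCounterexample G C0 φ0)
    (vtx : V → ℝ × ℝ) (arc : V → V → ℝ → ℝ × ℝ)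
    (hemb : IsPlaneEmbedding G vtx arc)
    (D : Set (ℝ × ℝ)) (hD : IsOuterFace G vtx arc D)
    (hbound : frontier D = WalkDrawing G arc C0) :
    ∀ (a : V) (C : G.Walk a a), C.IsCycle → C.length ≤ 9 →
      ¬ IsBadCycle G C → ¬ IsSeparatingCycle G vtx arc C := by
  classical
  rintro a C hC hClen hCbad ⟨⟨vin, hvin⟩, uout, huout⟩
  obtain ⟨-, -, hC0, hC0len, hφ0, hnot⟩ := hmin.1
  set I := {x | VertexInsideCycle G vtx arc C x}
  set B := {x | x ∈ C.support}
  have hsep : ∀ ⦃x y⦄, G.Adj x y → x ∈ I → y ∈ I ∨ y ∈ B :=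
    fun _ _ => vertexInsideCycle_or_mem_support_of_adj hemb hC.not_nil
  have hB : ∀ x ∈ B, x ∉ I := fun _ => not_vertexInsideCycle_of_mem_support hemb hC.not_nil
  have hC0I : ∀ x ∈ C0.support, x ∉ I := fun _ hx => not_vertexInsideCycle_of_mem_frontier hemb
    hD C (hbound ▸ vtx_mem_walkDrawing hemb hC0.1.not_nil hx)
  have huout : uout ∉ I ∪ B := by
    rintro (h | h)
    exacts [huout.2 h.2, huout.1 (vtx_mem_walkDrawing hemb hC.not_nil h)]
  obtain ⟨ψ, hψ, hψφ0⟩ := hmin.exists_superIFColoringOn (P := Iᶜ) (not_not.2 hvin)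
    (fun _ _ hx hy => exists_walk_within_of_boundary C hB
      (fun _ _ hxy hx hy => (hsep hxy (not_not.1 hx)).resolve_left hy) hx hy)
    C0 hC0 hC0len hC0I hφ0
  obtain ⟨χ, hχ, hχψ⟩ := hmin.exists_superIFColoringOn huout
    (fun _ _ hx hy => exists_walk_within_of_boundary C (fun _ => .inr)
      (fun _ _ hxy hx hy => hy.resolve_left fun hyI => hx (hsep hxy.symm hyI)) hx hy)
    C ⟨hC, hCbad⟩ hClen (fun _ => .inr) (hψ.1.mono hB)
  exact hnot ⟨_, hψ.superIFColoring_piecewise hsep hB hC0I hχ hχψ,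
    fun x hx => (Set.piecewise_eq_of_notMem _ _ _ (hC0I x hx)).trans (hψφ0 x hx)⟩

/-- A minimal counterexample `(G, C0, φ0)` to the extension
theorem, embedded in the plane so that the chordless cycle `C0` bounds the
outer face, contains no separating good cycle of length at most `9`. -/
theorem no_separating_good_cycle {V : Type} [Fintype V] (G : SimpleGraph V)
    {v0 : V} (C0 : G.Walk v0 v0) (φ0 : V → Bool)
    (hmin : IsMinimalCounterexample G C0 φ0)
    (vtx : V → ℝ × ℝ) (arc : V → V → ℝ → ℝ × ℝ)
    (hemb : IsPlaneEmbedding G vtx arc)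
    (hchordless : Chordless G C0)
    (D : Set (ℝ × ℝ)) (hD : IsOuterFace G vtx arc D)
    (hbound : frontier D = WalkDrawing G arc C0) :
    ∀ (a : V) (C : G.Walk a a), C.IsCycle → C.length ≤ 9 →
      ¬ IsBadCycle G C → ¬ IsSeparatingCycle G vtx arc C :=
  no_separating_good_cycle_general G C0 φ0 hmin vtx arc hemb D hD hbound

end IFPaper
end

section
/- Let G be a graph in which any two distinct cycles of length at most 5 are at distance at least 3. If C is a 9-cycle of G that has a triclaw, then no vertex of C is contained in a cycle of length at most 5. -/
/-! Let `xyz` be the triangle of the triclaw, attached to `C` at `a`, `b`, `c`, and suppose that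
the vertex `z₀` of `C` lies on a `5⁻`-cycle. The triangle is a `3`-cycle avoiding `z₀`, so by
`d* ≥ 3` none of `a`, `b`, `c` is `z₀` or a neighbour of `z₀`: they lie on the six-vertex path
`C - N[z₀]`, hence two of them, say `a` and `b`, are at most two steps apart along `C`. Closing the
arc of `C` from `a` to `b` through `y` and `x` gives a `4`- or `5`-cycle that meets the triangle in
`x` but misses `z`, again contradicting `d* ≥ 3`. -/

open SimpleGraph

namespace SimpleGraph.Walk

variable {V : Type*} {G : SimpleGraph V}

theorem IsPath.isCycle_cons_concat {u v x : V} {p : G.Walk u v} (hp : p.IsPath)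
    (hx : x ∉ p.support) (huv : u ≠ v) (hxu : G.Adj x u) (hvx : G.Adj v x) :
    (cons hxu (p.concat hvx)).IsCycle := by
  refine (cons_isCycle_iff _ hxu).mpr ⟨hp.concat hx hvx, ?_⟩
  rw [edges_concat, List.concat_eq_append, List.mem_append, List.mem_singleton]
  rintro (h | h)
  · exact hx (p.fst_mem_support_of_mem_edges h)
  · rcases Sym2.eq_iff.mp h with ⟨rfl, -⟩ | ⟨-, rfl⟩
    · exact hx p.end_mem_support
    · exact huv rfl

theorem isCycle_triangle {x y z : V} (hxy : G.Adj x y) (hyz : G.Adj y z) (hzx : G.Adj z x) :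
    (cons hxy ((cons hyz nil).concat hzx)).IsCycle :=
  (IsPath.nil.cons (by simpa using hyz.ne)).isCycle_cons_concat
    (by simp [hxy.ne, hzx.ne']) hyz.ne hxy hzx

theorem exists_walk_getVert_length_le_min {u : V} (c : G.Walk u u) (n : ℕ) :
    ∃ w : G.Walk (c.getVert n) u, w.length ≤ min n (c.length - n) := by
  rcases le_total n (c.length - n) with h | h
  · exact ⟨(c.take n).reverse, by simp; omega⟩
  · exact ⟨c.drop n, by simp; omega⟩

theorem IsCycle.exists_isPath_getVert {u : V} {c : G.Walk u u} (hc : c.IsCycle) {p q : ℕ}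
    (hp : 0 < p) (hpq : p ≤ q) (hq : q ≤ c.length) :
    ∃ P : G.Walk (c.getVert p) (c.getVert q),
      P.IsPath ∧ P.length = q - p ∧ ∀ v ∈ P.support, v ∈ c.support := by
  have hend : (c.drop p).getVert (q - p) = c.getVert q := by
    rw [drop_getVert, Nat.add_sub_cancel' hpq]
  refine ⟨((c.drop p).take (q - p)).copy rfl hend, ?_, ?_, fun v hv => ?_⟩
  · exact (isPath_copy _ _ _).mpr ((hc.isPath_drop hp).take _)
  · simp only [length_copy, take_length, drop_length]
    omega
  · rw [support_copy] at hv
    exact ((isSubwalk_take _ _).trans (isSubwalk_drop _ _)).support_subset hv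

end SimpleGraph.Walk

namespace IFPaper

open SimpleGraph.Walk

namespace Cycles5Apart

variable {V : Type} {G : SimpleGraph V}

theorem mem_support_iff_of_walk_length_le_two (hG : Cycles5Apart G) {u v s t : V}
    {c₁ : G.Walk u u} {c₂ : G.Walk v v} (hc₁ : c₁.IsCycle) (hc₂ : c₂.IsCycle) (hl₁ : c₁.length ≤ 5)
    (hl₂ : c₂.length ≤ 5) (hs : s ∈ c₁.support) (ht : t ∈ c₂.support) (W : G.Walk s t)
    (hW : W.length ≤ 2) (y : V) : y ∈ c₁.support ↔ y ∈ c₂.support := by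
  have hedges : {e | e ∈ c₁.edges} = {e | e ∈ c₂.edges} := by
    by_contra hne
    have := hG c₁ c₂ hc₁ hc₂ hl₁ hl₂ hne s hs t ht
    have := SimpleGraph.dist_le W
    omega
  simp only [Set.ext_iff, Set.mem_ofPred_eq] at hedges
  simp only [mem_support_iff_exists_mem_edges_of_not_nil hc₁.not_nil,
    mem_support_iff_exists_mem_edges_of_not_nil hc₂.not_nil, hedges]

theorem two_le_of_adj_getVert (hG : Cycles5Apart G) {u v r t : V} {C : G.Walk u u}
    {c : G.Walk v v} (hc : c.IsCycle) (hcl : c.length ≤ 5) (hu : u ∉ c.support) {w : G.Walk r r}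
    (hw : w.IsCycle) (hwl : w.length ≤ 5) (huw : u ∈ w.support) (ht : t ∈ c.support) {n : ℕ}
    (hadj : G.Adj t (C.getVert n)) : 2 ≤ n ∧ n + 2 ≤ C.length := by
  by_contra hnear
  obtain ⟨W, hW⟩ := C.exists_walk_getVert_length_le_min n
  exact hu ((hG.mem_support_iff_of_walk_length_le_two hc hw hcl hwl ht huw (cons hadj W)
    (by simp only [length_cons]; omega) u).mpr huw)

theorem not_adj_getVert_of_triangle (hG : Cycles5Apart G) {u x y z : V} {C : G.Walk u u}
    (hC : C.IsCycle) (hxy : G.Adj x y) (hyz : G.Adj y z) (hzx : G.Adj z x) (hx : x ∉ C.support)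
    (hy : y ∉ C.support) (hz : z ∉ C.support) {p q : ℕ} (hp : 0 < p) (hq : 0 < q)
    (hpq : p ≠ q) (hpq₂ : p ≤ q + 2) (hqp₂ : q ≤ p + 2) (hpl : p ≤ C.length)
    (hql : q ≤ C.length) (hxp : G.Adj x (C.getVert p)) : ¬ G.Adj y (C.getVert q) := by
  intro hyq
  wlog hlt : p < q generalizing p q x y
  · exact this hxy.symm hzx.symm hyz.symm hy hx hq hp hpq.symm hqp₂ hpq₂ hql hpl hyq hxp
      (by omega)
  obtain ⟨P, hP, hPlen, hPC⟩ := hC.exists_isPath_getVert hp hlt.le hql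
  have hD := (hP.concat (fun h => hy (hPC _ h)) hyq.symm).isCycle_cons_concat
    (by simpa [support_concat, hxy.ne] using fun h => hx (hPC _ h))
    (fun h => hy (h ▸ C.getVert_mem_support p)) hxp hxy.symm
  have hzD := (hG.mem_support_iff_of_walk_length_le_two (isCycle_triangle hxy hyz hzx) hD
    (by simp) (by simp only [length_cons, length_concat]; omega) (start_mem_support _)
    (start_mem_support _) nil (by simp) z).mp (by simp)
  simp only [support_cons, support_concat, List.mem_cons, List.mem_append,
    List.not_mem_nil, or_false] at hzD
  rcases hzD with rfl | (hzP | rfl) | rfl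
  · exact hzx.ne rfl
  · exact hz (hPC _ hzP)
  · exact hyz.ne rfl
  · exact hzx.ne rfl

end Cycles5Apart

/-- In a graph in which any two distinct cycles of length at
most `5` are at distance at least `3`, if a `9`-cycle `C` has a triclaw, then
no vertex of `C` is contained in a cycle of length at most `5`. -/
theorem triclaw_nine_cycle_vertices_not_on_short_cycles {V : Type}
    (G : SimpleGraph V) (hdist : Cycles5Apart G)
    {a : V} (C : G.Walk a a) (hC : C.IsCycle) (hlen : C.length = 9)
    (htriclaw : HasTriclaw G C) :
    ∀ z ∈ C.support, ∀ (r : V) (w : G.Walk r r),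
      w.IsCycle → w.length ≤ 5 → z ∉ w.support := by
  classical
  intro z₀ hz₀ r w hw hwl hz₀w
  obtain ⟨x, y, z, hx, hy, hz, hxy, hyz, hxz, a', b', c', ha', hb', hc', hab, hac, hbc,
    hxa, hyb, hzc⟩ := htriclaw
  set T := cons hxy ((cons hyz nil).concat hxz.symm)
  have hT : T.IsCycle := isCycle_triangle hxy hyz hxz.symm
  have hz₀T : z₀ ∉ T.support := by
    simp only [T, support_cons, support_concat, support_nil, List.mem_cons, List.mem_append,
      List.not_mem_nil, or_false]
    rintro (rfl | (rfl | rfl) | rfl) <;> contradiction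
  -- Indexed from `z₀`, the vertices of `C` at distance at most one from `z₀` are at 0, 1, 8, 9.
  set C' := C.rotate z₀ hz₀
  have hC' : C'.IsCycle := hC.rotate hz₀
  have hlen' : C'.length = 9 := by simp [C', hlen]
  have hmem : ∀ v, v ∈ C'.support ↔ v ∈ C.support := fun v => mem_support_rotate_iff _ _ _
  have hpos : ∀ t ∈ T.support, ∀ s ∈ C.support, G.Adj t s →
      ∃ n, C'.getVert n = s ∧ 2 ≤ n ∧ n + 2 ≤ 9 := by
    intro t ht s hs hts
    obtain ⟨n, rfl, -⟩ := mem_support_iff_exists_getVert.mp ((hmem s).mpr hs)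
    exact ⟨n, rfl, hlen' ▸ hdist.two_le_of_adj_getVert hT (by simp [T]) hz₀T hw hwl hz₀w ht hts⟩
  obtain ⟨i, rfl, hi⟩ := hpos x (by simp [T, support_concat]) a' ha' hxa
  obtain ⟨j, rfl, hj⟩ := hpos y (by simp [T, support_concat]) b' hb' hyb
  obtain ⟨k, rfl, hk⟩ := hpos z (by simp [T, support_concat]) c' hc' hzc
  rw [← hmem] at hx hy hz
  have hij : i ≠ j := fun h => hab (h ▸ rfl)
  have hik : i ≠ k := fun h => hac (h ▸ rfl)
  have hjk : j ≠ k := fun h => hbc (h ▸ rfl)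
  -- three distinct indices in `[2, 7]` cannot be pairwise at least three apart
  rcases (by omega : (i ≤ j + 2 ∧ j ≤ i + 2) ∨ (i ≤ k + 2 ∧ k ≤ i + 2) ∨
      (j ≤ k + 2 ∧ k ≤ j + 2)) with h | h | h
  · exact hdist.not_adj_getVert_of_triangle hC' hxy hyz hxz.symm hx hy hz (by omega) (by omega)
      hij h.1 h.2 (by omega) (by omega) hxa hyb
  · exact hdist.not_adj_getVert_of_triangle hC' hxz hyz.symm hxy.symm hx hz hy (by omega)
      (by omega) hik h.1 h.2 (by omega) (by omega) hxa hzc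
  · exact hdist.not_adj_getVert_of_triangle hC' hyz hxz.symm hxy hy hz hx (by omega)
      (by omega) hjk h.1 h.2 (by omega) (by omega) hyb hzc

end IFPaper
end
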